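/- Let M be a 3-connected matroid and let C = {e, f, g, h} be a 4-element circuit of M such that {g, h} is contained in a triad of M. If e is not contained in any triad of M and M/f is 3-connected, then M\e is 3-connected. -/

import Mathlib

/-!
Let `(X, Y)` be a `k`-separation of `M \ e` with `k ≤ 2`. As `e` is in no triad, `E - e` spans
`M`, so `λ_{M\e}(X) = r X + r Y - r M`. A side `X` with at most two elements is independent, so
`λ_{M\e}(X) < |X|` would make `E - (X ∪ e)` nonspanning and `X ∪ e` a triad. Hence both sides
have at least three elements, and `r X + r Y ≤ r M + 1`.

If `g` and `h` lie on the same side `P`, then `e ∉ cl P` by 3-connectivity of `M`, so `f` lies on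
the other side `Q` (as `e ∈ cl {f, g, h}`), and `(P ∪ e, Q - f)` is a 2-separation of `M / f`.
Otherwise, the triad `{g, h, t}` meets one side `A` in a single element `a ∈ {g, h}`. Then
`a ∉ cl (A - a)`, so moving `a` to the other side does not raise `r X + r Y`, and it brings `g`
and `h` together; this needs `|A| ≥ 4`. If `|A| = 3`, then `A` is independent and
`r (E - (A - z) - e) < r M` for `z ∈ A`, so `(A - z) ∪ e` is a triad.
-/

open Matroid Set

namespace DetPairs

variable {α : Type*}

/-- The rank of a set in a matroid: the maximum size of an independent subset
(as an integer, for convenient arithmetic). -/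
noncomputable def r (M : Matroid α) (X : Set α) : ℤ :=
  ((sSup (Set.ncard '' {I | M.Indep I ∧ I ⊆ X}) : ℕ) : ℤ)

/-- The connectivity function `λ_M(X) = r(X) + r(E − X) − r(M)`. -/
noncomputable def lam (M : Matroid α) (X : Set α) : ℤ :=
  r M X + r M (M.E \ X) - r M M.E

/-- Local connectivity `⊓(X,Y) = r(X) + r(Y) − r(X ∪ Y)`. -/
noncomputable def localConn (M : Matroid α) (X Y : Set α) : ℤ :=
  r M X + r M Y - r M (X ∪ Y)

/-- A circuit: a minimal dependent set. -/
def Circuit (M : Matroid α) (C : Set α) : Prop :=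
  C ⊆ M.E ∧ ¬ M.Indep C ∧ ∀ D, D ⊂ C → M.Indep D

/-- A cocircuit: a circuit of the dual. -/
def Cocircuit (M : Matroid α) (C : Set α) : Prop := Circuit M✶ C

/-- A triangle: a 3-element circuit. -/
def Triangle (M : Matroid α) (T : Set α) : Prop := Circuit M T ∧ T.ncard = 3

/-- A triad: a 3-element cocircuit. -/
def Triad (M : Matroid α) (T : Set α) : Prop := Cocircuit M T ∧ T.ncard = 3

/-- A quad: a 4-element set that is both a circuit and a cocircuit. -/
def Quad (M : Matroid α) (Q : Set α) : Prop :=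
  Circuit M Q ∧ Cocircuit M Q ∧ Q.ncard = 4

/-- Deletion of a set of elements. -/
def Del (M : Matroid α) (D : Set α) : Matroid α := M ↾ (M.E \ D)

/-- Contraction of a set of elements. -/
def Con (M : Matroid α) (C : Set α) : Matroid α := (M✶ ↾ (M.E \ C))✶

/-- `M` is 3-connected: it has no `k`-separation for `k = 1, 2`, where a
`k`-separation is a set `X` with `λ(X) = k − 1`, `|X| ≥ k` and `|E − X| ≥ k`. -/
def ThreeConnected (M : Matroid α) : Prop :=
  ∀ k : ℕ, 0 < k → k < 3 → ∀ X ⊆ M.E,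
    ¬ (lam M X = (k : ℤ) - 1 ∧ (k : ℤ) ≤ X.ncard ∧ (k : ℤ) ≤ (M.E \ X).ncard)

/-- A detachable pair: distinct elements `e, f` such that `M \ e \ f` or
`M / e / f` is 3-connected. -/
def DetachablePair (M : Matroid α) (e f : α) : Prop :=
  e ≠ f ∧ e ∈ M.E ∧ f ∈ M.E ∧
    (ThreeConnected (Del M {e, f}) ∨ ThreeConnected (Con M {e, f}))

/-- The triple of elements with indices `i, i+1, i+2` in an ordering. -/
def tri (e : ℕ → α) (i : ℕ) : Set α := {e i, e (i + 1), e (i + 2)}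

/-- `(e 0, …, e (n-1))` is a fan ordering of length `n ≥ 3` in `M`:
consecutive triples alternate between triangles and triads. -/
def FanOrd (M : Matroid α) (n : ℕ) (e : ℕ → α) : Prop :=
  3 ≤ n ∧ Set.InjOn e (Set.Iio n) ∧ (∀ i < n, e i ∈ M.E) ∧
    (Triangle M (tri e 0) ∨ Triad M (tri e 0)) ∧
    ∀ i, i + 3 < n →
      (Triangle M (tri e i) → Triad M (tri e (i + 1))) ∧
      (Triad M (tri e i) → Triangle M (tri e (i + 1)))

/-- A fan (as a set): either a 2-element subset of the ground set, or the
underlying set of a fan ordering of length at least 3. -/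
def IsFan (M : Matroid α) (F : Set α) : Prop :=
  (F ⊆ M.E ∧ F.ncard = 2) ∨ ∃ n e, FanOrd M n e ∧ F = e '' Set.Iio n

/-- A maximal fan: a fan contained in no strictly larger fan. -/
def MaximalFan (M : Matroid α) (F : Set α) : Prop :=
  IsFan M F ∧ ∀ F', IsFan M F' → F ⊆ F' → F' = F

/-- `M` is a wheel or a whirl: its ground set has a cyclic ordering of even size
`2n` in which consecutive triples alternate between triangles and triads. -/
def IsWheelOrWhirl (M : Matroid α) : Prop :=
  ∃ (n : ℕ) (e : ℕ → α), 2 ≤ n ∧ Set.InjOn e (Set.Iio (2 * n)) ∧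
    M.E = e '' Set.Iio (2 * n) ∧
    ∀ i < 2 * n,
      (i % 2 = 0 → Triangle M {e i, e ((i + 1) % (2 * n)), e ((i + 2) % (2 * n))}) ∧
      (i % 2 = 1 → Triad M {e i, e ((i + 1) % (2 * n)), e ((i + 2) % (2 * n))})

/-- An `M(K₄)`-separator: a 6-element set `{a,b,c,x,y,z}` where `{x,y,z}` is a
triad and `{a,b,c}`, `{a,x,y}`, `{b,x,z}`, `{c,y,z}` are triangles. -/
def MK4Sep (M : Matroid α) (S : Set α) : Prop :=
  ∃ a b c x y z : α, S = {a, b, c, x, y, z} ∧ S.ncard = 6 ∧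
    Triad M {x, y, z} ∧ Triangle M {a, b, c} ∧ Triangle M {a, x, y} ∧
    Triangle M {b, x, z} ∧ Triangle M {c, y, z}

/-- A vertical 3-separation `(X, {e}, Y)` of `M`. -/
def VertThreeSep (M : Matroid α) (X : Set α) (e : α) (Y : Set α) : Prop :=
  X ∪ {e} ∪ Y = M.E ∧ Disjoint X Y ∧ e ∉ X ∧ e ∉ Y ∧
    lam M X = 2 ∧ lam M Y = 2 ∧ e ∈ M.closure X ∧ e ∈ M.closure Y ∧
    3 ≤ r M X ∧ 3 ≤ r M Y

/-- `N` is a simplification of `M`: a restriction of `M` to a set of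
representatives, one from each parallel class of nonloops. -/
def SimplificationOf (M N : Matroid α) : Prop :=
  ∃ X : Set α, (∀ x ∈ X, x ∈ M.E ∧ x ∉ M.closure ∅) ∧ N = M ↾ X ∧
    ∀ y ∈ M.E, y ∉ M.closure ∅ →
      ∃! x, x ∈ X ∧ M.closure {y} = M.closure {x}

section Bridge

variable {M : Matroid α} {C X I : Set α}

lemma circuit_iff_isCircuit : Circuit M C ↔ M.IsCircuit C := by
  rw [isCircuit_iff_forall_ssubset, Dep, Circuit]
  tauto

lemma cocircuit_iff_isCocircuit : Cocircuit M C ↔ M.IsCocircuit C :=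
  circuit_iff_isCircuit

lemma r_nonneg (M : Matroid α) (X : Set α) : 0 ≤ r M X := Int.natCast_nonneg _

lemma natCast_toNat_r (M : Matroid α) (X : Set α) : ((r M X).toNat : ℤ) = r M X :=
  Int.toNat_of_nonneg (r_nonneg M X)

lemma r_eq_ncard_of_isBasis' [M.Finite] (hI : M.IsBasis' I X) : r M X = I.ncard := by
  have hub : ∀ n ∈ Set.ncard '' {J | M.Indep J ∧ J ⊆ X}, n ≤ I.ncard := by
    rintro n ⟨J, ⟨hJ, hJX⟩, rfl⟩
    obtain ⟨K, hK, hJK⟩ := hJ.subset_isBasis'_of_subset hJX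
    calc J.ncard ≤ K.ncard := ncard_le_ncard hJK (M.ground_finite.subset hK.indep.subset_ground)
      _ = I.ncard := by rw [ncard_def, hK.encard_eq_encard hI, ← ncard_def]
  have hmem : I.ncard ∈ Set.ncard '' {J | M.Indep J ∧ J ⊆ X} :=
    ⟨I, ⟨hI.indep, hI.subset⟩, rfl⟩
  exact congrArg _ (le_antisymm (csSup_le ⟨_, hmem⟩ hub) (le_csSup ⟨_, hub⟩ hmem))

lemma eRk_eq_r [M.Finite] (X : Set α) : M.eRk X = (r M X).toNat := by
  obtain ⟨I, hI⟩ := M.exists_isBasis' X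
  rw [r_eq_ncard_of_isBasis' hI, Int.toNat_natCast, ← hI.encard_eq_eRk,
    (M.ground_finite.subset hI.indep.subset_ground).cast_ncard_eq]

lemma r_restrict {R : Set α} (hXR : X ⊆ R) : r (M ↾ R) X = r M X := by
  unfold r
  congr 3
  ext I
  simp only [mem_ofPred_eq, restrict_indep_iff]
  exact ⟨fun ⟨⟨hI, _⟩, hIX⟩ ↦ ⟨hI, hIX⟩,
    fun ⟨hI, hIX⟩ ↦ ⟨⟨hI, hIX.trans hXR⟩, hIX⟩⟩

lemma lam_restrict {R : Set α} (hX : X ⊆ R) : lam (M ↾ R) X = r M X + r M (R \ X) - r M R := by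
  simp only [lam, restrict_ground_eq, r_restrict hX, r_restrict sdiff_subset, r_restrict subset_rfl]

end Bridge

section Rank

variable {M : Matroid α} [M.Finite] {X Y I : Set α} {x : α}

lemma r_indep (hI : M.Indep I) : r M I = I.ncard :=
  r_eq_ncard_of_isBasis' hI.isBasis_self.isBasis'

lemma r_le_ncard (hX : X ⊆ M.E) : r M X ≤ X.ncard := by
  obtain ⟨I, hI⟩ := M.exists_isBasis' X
  rw [r_eq_ncard_of_isBasis' hI]
  exact_mod_cast ncard_le_ncard hI.subset (M.ground_finite.subset hX)

lemma r_lt_ncard (hX : M.Dep X) : r M X < X.ncard := by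
  have h := hX.eRk_lt_encard
  rw [eRk_eq_r, ← (M.ground_finite.subset hX.subset_ground).cast_ncard_eq] at h
  norm_cast at h
  zify [natCast_toNat_r] at h
  exact h

lemma r_mono (hXY : X ⊆ Y) : r M X ≤ r M Y := by
  have h := M.eRk_mono hXY
  simp only [eRk_eq_r] at h
  norm_cast at h
  zify [natCast_toNat_r] at h
  exact h

lemma r_union_le (X Y : Set α) : r M (X ∪ Y) ≤ r M X + r M Y := by
  have h := M.eRk_union_le_eRk_add_eRk X Y
  simp only [eRk_eq_r] at h
  norm_cast at h
  zify [natCast_toNat_r] at h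
  exact h

lemma r_insert_le (x : α) (X : Set α) : r M (insert x X) ≤ r M X + 1 := by
  have h := M.eRk_insert_le_add_one x X
  simp only [eRk_eq_r] at h
  norm_cast at h
  zify [natCast_toNat_r] at h
  exact h

lemma r_insert_of_mem_closure (hx : x ∈ M.closure X) : r M (insert x X) = r M X := by
  have h : M.eRk (insert x X) = M.eRk X := by
    rw [← eRk_closure_eq, closure_insert_eq_of_mem_closure hx, eRk_closure_eq]
  simp only [eRk_eq_r] at h
  norm_cast at h
  zify [natCast_toNat_r] at h
  exact h

lemma r_insert_of_notMem_closure (hx : x ∈ M.E \ M.closure X) :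
    r M (insert x X) = r M X + 1 := by
  have h := eRk_insert_eq_add_one hx
  simp only [eRk_eq_r] at h
  norm_cast at h
  zify [natCast_toNat_r] at h
  exact h

lemma coindep_iff_r_compl (hX : X ⊆ M.E) : M.Coindep X ↔ r M (M.E \ X) = r M M.E := by
  rw [coindep_iff_compl_spanning, spanning_iff_eRk_le, ← eRk_ground]
  simp only [eRk_eq_r]
  norm_cast
  zify [natCast_toNat_r]
  have := r_mono (M := M) (sdiff_subset : M.E \ X ⊆ M.E)
  omega

lemma r_contract_singleton {f : α} (hf : M.IsNonloop f) (hfX : f ∉ X) :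
    r (M ／ {f}) X = r M (insert f X) - 1 := by
  obtain ⟨I, hI, hfI⟩ :=
    hf.indep.subset_isBasis'_of_subset (singleton_subset_iff.2 (mem_insert f X))
  have hIc := hI.contract_isBasis_of_indep (J := {f})
    (by rw [union_eq_self_of_subset_right hfI]; exact hI.indep)
  rw [insert_sdiff_self_of_notMem hfX] at hIc
  have := ncard_sdiff_singleton_add_one (singleton_subset_iff.1 hfI)
    (M.ground_finite.subset hI.indep.subset_ground)
  rw [r_eq_ncard_of_isBasis' hIc, r_eq_ncard_of_isBasis' hI]
  omega

end Rank

section Connectivity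

variable {M : Matroid α} [M.Finite] {X Z K : Set α} {x : α}

lemma lam_nonneg (hX : X ⊆ M.E) : 0 ≤ lam M X := by
  have := r_union_le (M := M) X (M.E \ X)
  rw [union_sdiff_cancel hX] at this
  unfold lam
  omega

lemma ThreeConnected.le_lam (hM : ThreeConnected M) (hX : X ⊆ M.E) {k : ℕ} (hk : k ≤ 2)
    (hXk : k ≤ X.ncard) (hYk : k ≤ (M.E \ X).ncard) : (k : ℤ) ≤ lam M X := by
  by_contra! hlt
  have := lam_nonneg hX
  obtain h | h : lam M X = 0 ∨ lam M X = 1 := by omega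
  · exact hM 1 one_pos (by norm_num) X hX ⟨by rw [h]; norm_num, by omega, by omega⟩
  · exact hM 2 two_pos (by norm_num) X hX ⟨by rw [h]; norm_num, by omega, by omega⟩

lemma ThreeConnected.ncard_le_lam (hM : ThreeConnected M) (hE : 4 ≤ M.E.ncard) (hX : X ⊆ M.E)
    (h2 : X.ncard ≤ 2) : (X.ncard : ℤ) ≤ lam M X :=
  hM.le_lam hX h2 le_rfl (by rw [ncard_sdiff hX (M.ground_finite.subset hX)]; omega)

lemma ThreeConnected.indep_of_ncard_le_two (hM : ThreeConnected M) (hE : 4 ≤ M.E.ncard)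
    (hX : X ⊆ M.E) (h2 : X.ncard ≤ 2) : M.Indep X := by
  by_contra hdep
  have := r_lt_ncard ⟨hdep, hX⟩
  have := r_mono (M := M) (sdiff_subset : M.E \ X ⊆ M.E)
  have := hM.ncard_le_lam hE hX h2
  unfold lam at this
  omega

lemma ThreeConnected.three_le_ncard_of_isCocircuit (hM : ThreeConnected M)
    (hE : 4 ≤ M.E.ncard) (hK : M.IsCocircuit K) : 3 ≤ K.ncard := by
  by_contra! h
  have hKE := hK.subset_ground
  have hr : r M (M.E \ K) ≠ r M M.E :=
    fun h' ↦ hK.isCircuit.not_indep ((coindep_iff_r_compl hKE).2 h')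
  have := r_mono (M := M) (sdiff_subset : M.E \ K ⊆ M.E)
  have := r_le_ncard hKE
  have := hM.ncard_le_lam hE hKE (by omega)
  unfold lam at this
  omega

lemma ThreeConnected.triad_of_r_compl_lt (hM : ThreeConnected M) (hE : 4 ≤ M.E.ncard)
    (hZ : Z ⊆ M.E) (h3 : Z.ncard ≤ 3) (hr : r M (M.E \ Z) < r M M.E) : Triad M Z := by
  have hdep : M✶.Dep Z := ⟨fun hi ↦ hr.ne ((coindep_iff_r_compl hZ).1 hi), hZ⟩
  obtain ⟨K, hKZ, hK⟩ := hdep.exists_isCircuit_subset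
  have hK3 := hM.three_le_ncard_of_isCocircuit hE hK
  obtain rfl := eq_of_subset_of_ncard_le hKZ (by omega) (M.ground_finite.subset hZ)
  exact ⟨cocircuit_iff_isCocircuit.2 hK, by omega⟩

lemma ThreeConnected.r_sdiff_insert_eq {e : α} (hM : ThreeConnected M) (hE : 4 ≤ M.E.ncard)
    (he : ∀ T, Triad M T → e ∉ T) (heE : e ∈ M.E) (hZ : Z ⊆ M.E) (h2 : Z.ncard ≤ 2) :
    r M (M.E \ insert e Z) = r M M.E := by
  refine le_antisymm (r_mono sdiff_subset) (not_lt.1 fun hlt ↦ he _ ?_ (mem_insert e Z))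
  exact hM.triad_of_r_compl_lt hE (insert_subset heE hZ)
    ((ncard_insert_le e Z).trans (by omega)) hlt

end Connectivity

lemma notMem_closure_of_isCocircuit {M : Matroid α} {X K : Set α} {a : α}
    (hK : M.IsCocircuit K) (haK : a ∈ K) (hXK : Disjoint X K) : a ∉ M.closure X := by
  intro ha
  obtain ⟨C, hCX, hC, haC⟩ := exists_isCircuit_of_mem_closure ha (hXK.notMem_of_mem_right haK)
  refine hC.inter_isCocircuit_ne_singleton hK
    (subset_antisymm ?_ (singleton_subset_iff.2 ⟨haC, haK⟩))
  rintro z ⟨hzC, hzK⟩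
  rcases hCX hzC with rfl | hzX
  · rfl
  · exact absurd hzK (hXK.notMem_of_mem_left hzX)

/-- When `e` is not a coloop, `λ_{M＼e}(X) = r M X + r M Y - r M M.E`; the lemmas below bound this
quantity from below. -/
structure IsDeletePartition (M : Matroid α) (e : α) (X Y : Set α) : Prop where
  mem_ground : e ∈ M.E
  union_eq : X ∪ Y = M.E \ {e}
  disjoint : Disjoint X Y

namespace IsDeletePartition

variable {M : Matroid α} {e a : α} {X Y : Set α}

lemma symm (hP : IsDeletePartition M e X Y) : IsDeletePartition M e Y X :=
  ⟨hP.mem_ground, union_comm X Y ▸ hP.union_eq, hP.disjoint.symm⟩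

lemma subset_left (hP : IsDeletePartition M e X Y) : X ⊆ M.E \ {e} :=
  hP.union_eq ▸ subset_union_left

lemma subset_ground_left (hP : IsDeletePartition M e X Y) : X ⊆ M.E :=
  hP.subset_left.trans sdiff_subset

lemma notMem_left (hP : IsDeletePartition M e X Y) : e ∉ X :=
  fun h ↦ (hP.subset_left h).2 rfl

lemma sdiff_insert_left (hP : IsDeletePartition M e X Y) : M.E \ insert e X = Y := by
  rw [insert_eq, ← sdiff_sdiff, ← hP.union_eq, union_sdiff_left, hP.disjoint.symm.sdiff_eq_left]

lemma mem_or_mem (hP : IsDeletePartition M e X Y) {z : α} (hz : z ∈ M.E) (hze : z ≠ e) :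
    z ∈ X ∨ z ∈ Y := by
  rw [← mem_union, hP.union_eq]
  exact ⟨hz, hze⟩

lemma move (hP : IsDeletePartition M e X Y) (ha : a ∈ X) :
    IsDeletePartition M e (X \ {a}) (insert a Y) := by
  refine ⟨hP.mem_ground, ?_, ?_⟩
  · rw [← hP.union_eq, union_insert, ← insert_union, insert_sdiff_singleton,
      insert_eq_of_mem ha]
  · rw [disjoint_insert_right]
    exact ⟨fun h ↦ h.2 rfl, hP.disjoint.mono_left sdiff_subset⟩

variable [M.Finite]

lemma le_r_insert_add_r (hP : IsDeletePartition M e X Y) (hM : ThreeConnected M)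
    (hX : X.Nonempty) (hY : 2 ≤ Y.ncard) : r M M.E + 2 ≤ r M (insert e X) + r M Y := by
  have hXfin := M.ground_finite.subset hP.subset_ground_left
  have h := hM.le_lam (insert_subset hP.mem_ground hP.subset_ground_left) (k := 2) le_rfl
    (by rw [ncard_insert_of_notMem hP.notMem_left hXfin]; have := (ncard_pos hXfin).2 hX; omega)
    (by rwa [hP.sdiff_insert_left])
  rw [lam, hP.sdiff_insert_left] at h
  push_cast at h
  omega

lemma le_r_add_r_of_contract (hP : IsDeletePartition M e X Y) {f : α}
    (hMf : ThreeConnected (M ／ {f})) (hf : M.IsNonloop f) (hfY : f ∈ Y) (hX : X.Nonempty)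
    (hY : 3 ≤ Y.ncard) (heX : e ∉ M.closure X) (hfX : f ∈ M.closure (insert e X)) :
    r M M.E + 2 ≤ r M X + r M Y := by
  have hfeX : f ∉ insert e X := by
    rintro (rfl | hfX)
    · exact hP.symm.notMem_left hfY
    · exact hP.disjoint.notMem_of_mem_left hfX hfY
  have hXfin := M.ground_finite.subset hP.subset_ground_left
  have hYfin := M.ground_finite.subset hP.symm.subset_ground_left
  have hcompl : (M ／ {f}).E \ insert e X = Y \ {f} := by
    rw [contract_ground, sdiff_right_comm, hP.sdiff_insert_left]
  have h := hMf.le_lam (k := 2)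
    (subset_sdiff_singleton (insert_subset hP.mem_ground hP.subset_ground_left) hfeX) le_rfl
    (by rw [ncard_insert_of_notMem hP.notMem_left hXfin]; have := (ncard_pos hXfin).2 hX; omega)
    (by rw [hcompl]; have := ncard_sdiff_singleton_add_one hfY hYfin; omega)
  rw [lam, hcompl, contract_ground, r_contract_singleton hf hfeX,
    r_contract_singleton hf (fun h ↦ h.2 rfl), r_contract_singleton hf (fun h ↦ h.2 rfl),
    r_insert_of_mem_closure hfX, r_insert_of_notMem_closure ⟨hP.mem_ground, heX⟩,
    insert_sdiff_singleton, insert_eq_of_mem hfY, insert_sdiff_singleton,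
    insert_eq_of_mem hf.mem_ground] at h
  push_cast at h
  omega

lemma r_add_r_eq_of_ncard_le_two (hP : IsDeletePartition M e X Y) (hM : ThreeConnected M)
    (hE : 4 ≤ M.E.ncard) (he : ∀ T, Triad M T → e ∉ T) (hX : X.ncard ≤ 2) :
    r M X + r M Y = X.ncard + r M M.E := by
  rw [r_indep (hM.indep_of_ncard_le_two hE hP.subset_ground_left hX), ← hP.sdiff_insert_left,
    hM.r_sdiff_insert_eq hE he hP.mem_ground hP.subset_ground_left hX]

lemma le_r_add_r_of_indep_of_ncard_eq_three (hP : IsDeletePartition M e X Y)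
    (hM : ThreeConnected M) (hE : 4 ≤ M.E.ncard) (he : ∀ T, Triad M T → e ∉ T)
    (hX : X.ncard = 3) (hXi : M.Indep X) : r M M.E + 2 ≤ r M X + r M Y := by
  obtain ⟨z, hz⟩ := nonempty_of_ncard_ne_zero (hX ▸ three_ne_zero : X.ncard ≠ 0)
  have hXz := ncard_sdiff_singleton_add_one hz (M.ground_finite.subset hP.subset_ground_left)
  have := hM.r_sdiff_insert_eq hE he hP.mem_ground (sdiff_subset.trans hP.subset_ground_left)
    (Z := X \ {z}) (by omega)
  rw [(hP.move hz).sdiff_insert_left] at this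
  have := r_insert_le (M := M) z Y
  rw [r_indep hXi, hX]
  push_cast
  omega

lemma le_r_add_r_of_isCocircuit {f b : α} {T : Set α} (hP : IsDeletePartition M e X Y)
    (hM : ThreeConnected M) (hMf : ThreeConnected (M ／ {f})) (hE : 4 ≤ M.E.ncard)
    (he : ∀ T, Triad M T → e ∉ T) (hf : M.IsNonloop f) (hfe : f ≠ e) (hfa : f ≠ a)
    (haX : a ∈ X) (hbY : b ∈ Y) (hX : 3 ≤ X.ncard) (hT : M.IsCocircuit T) (haT : a ∈ T)
    (hTY : T ⊆ insert a Y) (hecl : e ∈ M.closure {f, a, b}) (hfcl : f ∈ M.closure {e, a, b}) :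
    r M M.E + 2 ≤ r M X + r M Y := by
  by_contra! hr
  have hP' := (hP.move haX).symm
  have hXa := ncard_sdiff_singleton_add_one haX (M.ground_finite.subset hP.subset_ground_left)
  have hacl : a ∉ M.closure (X \ {a}) := by
    refine notMem_closure_of_isCocircuit hT haT (disjoint_left.2 fun z hz hzT ↦ ?_)
    rcases hTY hzT with rfl | hzY
    · exact hz.2 rfl
    · exact hP.disjoint.notMem_of_mem_left hz.1 hzY
  have hrXa := r_insert_of_notMem_closure ⟨hP.subset_ground_left haX, hacl⟩
  rw [insert_sdiff_singleton, insert_eq_of_mem haX] at hrXa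
  have hsep := hP'.le_r_insert_add_r hM (insert_nonempty a Y) (by omega)
  have := r_insert_le (M := M) e (insert a Y)
  have := r_insert_le (M := M) a Y
  have heaY : e ∉ M.closure (insert a Y) := fun h ↦ by
    rw [r_insert_of_mem_closure h] at hsep
    omega
  have habY : {a, b} ⊆ insert a Y := pair_subset (mem_insert a Y) (mem_insert_of_mem a hbY)
  have hfX : f ∈ X \ {a} := by
    refine ⟨(hP.mem_or_mem hf.mem_ground hfe).resolve_right fun hfY ↦ heaY ?_, hfa⟩
    exact M.closure_subset_closure (insert_subset (mem_insert_of_mem a hfY) habY) hecl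
  obtain hX3 | hX4 := eq_or_lt_of_le hX
  · have hXa2 : (X \ {a}).ncard = 2 := by omega
    have hXi := ((hM.indep_of_ncard_le_two hE (sdiff_subset.trans hP.subset_ground_left)
      hXa2.le).insert_indep_iff_of_notMem (fun h ↦ h.2 rfl)).2
      ⟨hP.subset_ground_left haX, hacl⟩
    rw [insert_sdiff_singleton, insert_eq_of_mem haX] at hXi
    have := hP.le_r_add_r_of_indep_of_ncard_eq_three hM hE he hX3.symm hXi
    omega
  · have := hP'.le_r_add_r_of_contract hMf hf hfX (insert_nonempty a Y) (by omega) heaY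
      (M.closure_subset_closure (insert_subset_insert habY) hfcl)
    omega

lemma le_r_add_r {f g h : α} {T : Set α} (hP : IsDeletePartition M e X Y)
    (hM : ThreeConnected M) (hMf : ThreeConnected (M ／ {f})) (hE : 4 ≤ M.E.ncard)
    (he : ∀ T, Triad M T → e ∉ T) (hf : M.IsNonloop f) (hfe : f ≠ e) (hfg : f ≠ g)
    (hfh : f ≠ h) (hgh : g ≠ h) (hecl : e ∈ M.closure {f, g, h})
    (hfcl : f ∈ M.closure {e, g, h}) (hT : Triad M T) (hghT : {g, h} ⊆ T)
    (hX : 3 ≤ X.ncard) (hY : 3 ≤ Y.ncard) : r M M.E + 2 ≤ r M X + r M Y := by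
  have heT := he T hT
  have hT' := cocircuit_iff_isCocircuit.1 hT.1
  have hgT : g ∈ T := hghT (mem_insert g {h})
  have hhT : h ∈ T := hghT (mem_insert_of_mem g rfl)
  wlog hgX : g ∈ X generalizing X Y
  · have := this hP.symm hY hX
      ((hP.mem_or_mem (hT'.subset_ground hgT) (ne_of_mem_of_not_mem hgT heT)).resolve_left hgX)
    omega
  by_contra! hr
  obtain ⟨t, ht⟩ := ncard_eq_one.1 (show (T \ {g, h}).ncard = 1 by
    rw [ncard_sdiff hghT (toFinite _), ncard_pair hgh, hT.2])
  have htT : t ∈ T := (ht.symm.subset rfl : t ∈ T \ {g, h}).1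
  have hTt : T ⊆ {g, h} ∪ {t} := sdiff_subset_iff.1 ht.subset
  rcases hP.mem_or_mem (hT'.subset_ground hhT) (ne_of_mem_of_not_mem hhT heT) with hhX | hhY
  · have hghX : {g, h} ⊆ X := pair_subset hgX hhX
    have heX : e ∉ M.closure X := fun h' ↦ by
      have := hP.le_r_insert_add_r hM ⟨g, hgX⟩ (by omega)
      rw [r_insert_of_mem_closure h'] at this
      omega
    have hfY : f ∈ Y := (hP.mem_or_mem hf.mem_ground hfe).resolve_left
      fun hfX ↦ heX (M.closure_subset_closure (insert_subset hfX hghX) hecl)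
    have := hP.le_r_add_r_of_contract hMf hf hfY ⟨g, hgX⟩ hY heX
      (M.closure_subset_closure (insert_subset_insert hghX) hfcl)
    omega
  rcases hP.mem_or_mem (hT'.subset_ground htT) (ne_of_mem_of_not_mem htT heT) with htX | htY
  · have hTX : T ⊆ insert h X := hTt.trans (union_subset
      (pair_subset (mem_insert_of_mem h hgX) (mem_insert h X))
      (singleton_subset_iff.2 (mem_insert_of_mem h htX)))
    have := hP.symm.le_r_add_r_of_isCocircuit hM hMf hE he hf hfe hfh hhY hgX hY hT' hhT hTX
      (by rwa [pair_comm]) (by rwa [pair_comm])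
    omega
  · have hTY : T ⊆ insert g Y := hTt.trans (union_subset
      (pair_subset (mem_insert g Y) (mem_insert_of_mem g hhY))
      (singleton_subset_iff.2 (mem_insert_of_mem g htY)))
    have := hP.le_r_add_r_of_isCocircuit hM hMf hE he hf hfe hfg hgX hhY hX hT' hgT hTY hecl hfcl
    omega

end IsDeletePartition

lemma pairwise_ne_of_ncard_eq_four {a b c d : α} (h : ({a, b, c, d} : Set α).ncard = 4) :
    a ≠ b ∧ a ≠ c ∧ a ≠ d ∧ b ≠ c ∧ b ≠ d ∧ c ≠ d := by
  have h3 (x y z : α) : ({x, y, z} : Set α).ncard < 4 := by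
    have := ncard_insert_le x {y, z}
    have := ncard_insert_le y {z}
    rw [ncard_singleton] at *
    omega
  refine ⟨?_, ?_, ?_, ?_, ?_, ?_⟩ <;> rintro rfl <;>
    simp only [mem_insert_iff, mem_singleton_iff, true_or, or_true, insert_eq_of_mem] at h <;>
    exact (h3 _ _ _).ne h

/-- If `{e,f,g,h}` is a 4-element circuit with `{g,h}` in a triad, `e` is in no
triad, and `M / f` is 3-connected, then `M \ e` is 3-connected. -/
theorem stmt11 (M : Matroid α) [M.Finite] (hM : ThreeConnected M)
    {e f g h : α} (hC : Circuit M {e, f, g, h})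
    (hcard : ({e, f, g, h} : Set α).ncard = 4)
    (hgh : ∃ T, Triad M T ∧ {g, h} ⊆ T)
    (he : ∀ T, Triad M T → e ∉ T)
    (hf : ThreeConnected (Con M {f})) :
    ThreeConnected (Del M {e}) := by
  obtain ⟨T, hT, hghT⟩ := hgh
  obtain ⟨hef, -, -, hfg, hfh, hgh⟩ := pairwise_ne_of_ncard_eq_four hcard
  rw [circuit_iff_isCircuit] at hC
  have hCE := hC.subset_ground
  have hE : 4 ≤ M.E.ncard := hcard ▸ ncard_le_ncard hCE M.ground_finite
  have heE : e ∈ M.E := hCE (mem_insert e _)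
  have hfn : M.IsNonloop f := indep_singleton.1 <| hM.indep_of_ncard_le_two hE
    (singleton_subset_iff.2 (hCE (by simp))) (by simp)
  have hecl : e ∈ M.closure {f, g, h} := M.closure_subset_closure
    (sdiff_singleton_subset_iff.2 subset_rfl) (hC.mem_closure_sdiff_singleton_of_mem (by simp))
  have hfcl : f ∈ M.closure {e, g, h} := M.closure_subset_closure
    (sdiff_singleton_subset_iff.2 (by rw [insert_comm]))
    (hC.mem_closure_sdiff_singleton_of_mem (by simp))
  have hrE : r M (M.E \ {e}) = r M M.E := by
    simpa using hM.r_sdiff_insert_eq hE he heE (empty_subset _) (by simp)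
  intro k hk0 hk3 X hX ⟨hlam, hkX, hkY⟩
  change _ ≤ (((M.E \ {e}) \ X).ncard : ℤ) at hkY
  have hP : IsDeletePartition M e X ((M.E \ {e}) \ X) :=
    ⟨heE, union_sdiff_cancel hX, disjoint_sdiff_right⟩
  rw [show lam (Del M {e}) X = _ from lam_restrict hX, hrE] at hlam
  rcases le_or_gt X.ncard 2 with hX2 | hX3
  · have := hP.r_add_r_eq_of_ncard_le_two hM hE he hX2
    omega
  rcases le_or_gt ((M.E \ {e}) \ X).ncard 2 with hY2 | hY3
  · have := hP.symm.r_add_r_eq_of_ncard_le_two hM hE he hY2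
    omega
  have := hP.le_r_add_r hM hf hE he hfn (Ne.symm hef) hfg hfh hgh hecl hfcl hT hghT hX3 hY3
  omega
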